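/- For any two colours, i.e. any colouring c : ℚ → Bool, there is a non-identity order-preserving bijection γ of ℚ with c(γ(q)) = c(q) for all q. -/

import Mathlib

/-!
If both colours are dense, `ℚ` with its colouring is homogeneous: the back-and-forth argument
behind Cantor's isomorphism theorem, run with colour-preserving finite partial isomorphisms,
moves `0` to any point of the same colour, for instance to one in `(0, 1)`. Otherwise some
interval `(x, y)` is monochromatic. Being a countable dense order without endpoints, it has a
fixed-point-free automorphism (translation by `1` transported along an isomorphism with `ℚ`),
and extending that by the identity outside the interval preserves colours.
-/

open Order

variable {α κ : Type*} [LinearOrder α]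

theorem Set.OrdConnected.lt_iff_lt_of_notMem {s : Set α} (hs : s.OrdConnected) {x y z : α}
    (hx : x ∈ s) (hz : z ∈ s) (hy : y ∉ s) : x < y ↔ z < y := by
  have key : ∀ {x z : α}, x ∈ s → z ∈ s → x < y → z < y := fun hx hz hxy => by
    by_contra! hyz
    exact hy (hs.out hx hz ⟨hxy.le, hyz⟩)
  exact ⟨key hx hz, key hz hx⟩

section ExtendByIdentity

variable {s : Set α} [DecidablePred (· ∈ s)]

theorem Set.OrdConnected.monotone_ofSubtype (hs : s.OrdConnected) (ψ : s ≃o s) :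
    Monotone (Equiv.Perm.ofSubtype ψ.toEquiv) := by
  intro x y hxy
  by_cases hx : x ∈ s <;> by_cases hy : y ∈ s <;>
    simp only [Equiv.Perm.ofSubtype_apply_of_mem, Equiv.Perm.ofSubtype_apply_of_not_mem, hx, hy,
      not_false_eq_true]
  · exact ψ.monotone (Subtype.mk_le_mk.2 hxy)
  · exact ((hs.lt_iff_lt_of_notMem hx (ψ ⟨x, hx⟩).2 hy).1
      (hxy.lt_of_ne (ne_of_mem_of_not_mem hx hy))).le
  · exact not_lt.1 fun h => not_lt.2 hxy ((hs.lt_iff_lt_of_notMem (ψ ⟨y, hy⟩).2 hy hx).1 h)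
  · exact hxy

noncomputable def OrderIso.extendOrdConnected (hs : s.OrdConnected) (ψ : s ≃o s) : α ≃o α :=
  StrictMono.orderIsoOfSurjective _
    ((hs.monotone_ofSubtype ψ).strictMono_of_injective (Equiv.injective _)) (Equiv.surjective _)

theorem exists_orderIso_ne_refl_of_forall_mem_color_eq (hs : s.OrdConnected) {ψ : s ≃o s}
    (hψ : ψ ≠ OrderIso.refl s) {c : α → κ} {k : κ} (hc : ∀ x ∈ s, c x = k) :
    ∃ γ : α ≃o α, γ ≠ OrderIso.refl α ∧ ∀ x, c (γ x) = c x := by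
  have hγ : ∀ x, OrderIso.extendOrdConnected hs ψ x = Equiv.Perm.ofSubtype ψ.toEquiv x :=
    fun _ => rfl
  refine ⟨OrderIso.extendOrdConnected hs ψ, ?_, fun x => ?_⟩
  · obtain ⟨x, hx⟩ := DFunLike.ne_iff.1 hψ
    refine DFunLike.ne_iff.2 ⟨(x : α), ?_⟩
    rw [hγ, Equiv.Perm.ofSubtype_apply_coe]
    exact fun h => hx (Subtype.ext h)
  · by_cases hx : x ∈ s
    · rw [hγ, Equiv.Perm.ofSubtype_apply_of_mem _ hx, hc _ hx]
      exact hc _ (ψ ⟨x, hx⟩).2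
    · rw [hγ, Equiv.Perm.ofSubtype_apply_of_not_mem _ hx]

end ExtendByIdentity

theorem exists_orderIso_ne_refl [Countable α] [DenselyOrdered α] [NoMinOrder α] [NoMaxOrder α]
    [Nonempty α] : ∃ ψ : α ≃o α, ψ ≠ OrderIso.refl α := by
  obtain ⟨e⟩ := iso_of_countable_dense α ℚ
  refine ⟨e.trans ((OrderIso.addRight 1).trans e.symm), fun h => ?_⟩
  obtain ⟨x⟩ := ‹Nonempty α›
  have := congrArg e (DFunLike.congr_fun h x)
  simp at this

def IsColorDense (c : α → κ) : Prop :=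
  ∀ k x y, x < y → ∃ z ∈ Set.Ioo x y, c z = k

theorem IsColorDense.exists_between_finsets [DenselyOrdered α] [NoMinOrder α] [NoMaxOrder α]
    [Nonempty α] {c : α → κ} (hc : IsColorDense c) (k : κ) (lo hi : Finset α)
    (lo_lt_hi : ∀ x ∈ lo, ∀ y ∈ hi, x < y) :
    ∃ m, c m = k ∧ (∀ x ∈ lo, x < m) ∧ ∀ y ∈ hi, m < y := by
  obtain ⟨m, hlo, hhi⟩ := Order.exists_between_finsets lo hi lo_lt_hi
  obtain ⟨m', hmm', hhi'⟩ := Order.exists_between_finsets {m} hi fun x hx y hy => by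
    rw [Finset.mem_singleton.1 hx]
    exact hhi y hy
  obtain ⟨z, ⟨hmz, hzm'⟩, hz⟩ := hc k m m' (hmm' m (Finset.mem_singleton_self m))
  exact ⟨z, hz, fun x hx => (hlo x hx).trans hmz, fun y hy => hzm'.trans (hhi' y hy)⟩

variable (c : α → κ)

def ColorPartialIso : Type _ :=
  { f : PartialIso α α // ∀ p ∈ f.1, c p.1 = c p.2 }

noncomputable instance : Preorder (ColorPartialIso c) := Subtype.preorder _

namespace ColorPartialIso

variable {c}

protected def comm (f : ColorPartialIso c) : ColorPartialIso c :=
  ⟨f.1.comm, fun p hp => by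
    obtain ⟨q, hq, rfl⟩ := Finset.mem_image.1 hp
    exact (f.2 q hq).symm⟩

theorem swap_mem_comm {f : ColorPartialIso c} {p : α × α} (hp : p ∈ f.1.1) :
    p.swap ∈ f.comm.1.1 :=
  Finset.mem_image_of_mem _ hp

protected def insert (f : ColorPartialIso c) (a b : α) (hab : c a = c b)
    (hf : ∀ p ∈ f.1.1, cmp p.1 a = cmp p.2 b) : ColorPartialIso c :=
  ⟨⟨insert (a, b) f.1.1, fun p hp q hq => by
    rcases Finset.mem_insert.1 hp with rfl | hp <;> rcases Finset.mem_insert.1 hq with rfl | hq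
    · simp only [cmp_self_eq_eq]
    · rw [cmp_eq_cmp_symm]
      exact hf q hq
    · exact hf p hp
    · exact f.1.2 p hp q hq⟩, fun p hp => by
    rcases Finset.mem_insert.1 hp with rfl | hp
    · exact hab
    · exact f.2 p hp⟩

variable [DenselyOrdered α] [NoMinOrder α] [NoMaxOrder α] [Nonempty α]

theorem exists_across (hc : IsColorDense c) (f : ColorPartialIso c) (a : α) :
    ∃ b, c a = c b ∧ ∀ p ∈ f.1.1, cmp p.1 a = cmp p.2 b := by
  by_cases h : ∃ b, (a, b) ∈ f.1.1
  · obtain ⟨b, hb⟩ := h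
    exact ⟨b, f.2 _ hb, fun p hp => f.1.2 p hp _ hb⟩
  have lo_lt_hi : ∀ x ∈ {p ∈ f.1.1 | p.1 < a}.image Prod.snd,
      ∀ y ∈ {p ∈ f.1.1 | a < p.1}.image Prod.snd, x < y := by
    simp only [Finset.mem_image, Finset.mem_filter]
    rintro _ ⟨p, ⟨hp, hpa⟩, rfl⟩ _ ⟨q, ⟨hq, haq⟩, rfl⟩
    rw [← lt_iff_lt_of_cmp_eq_cmp (f.1.2 p hp q hq)]
    exact hpa.trans haq
  obtain ⟨b, hb, hlo, hhi⟩ := hc.exists_between_finsets (c a) _ _ lo_lt_hi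
  refine ⟨b, hb.symm, fun p hp => ?_⟩
  rcases lt_or_gt_of_ne fun hpa : p.1 = a => h ⟨p.2, hpa ▸ hp⟩ with hpa | hap
  · rw [(cmp_eq_lt_iff _ _).2 hpa, (cmp_eq_lt_iff _ _).2
      (hlo _ (Finset.mem_image_of_mem _ (Finset.mem_filter.2 ⟨hp, hpa⟩)))]
  · rw [(cmp_eq_gt_iff _ _).2 hap, (cmp_eq_gt_iff _ _).2
      (hhi _ (Finset.mem_image_of_mem _ (Finset.mem_filter.2 ⟨hp, hap⟩)))]

theorem exists_across_symm (hc : IsColorDense c) (f : ColorPartialIso c) (b : α) :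
    ∃ a, c a = c b ∧ ∀ p ∈ f.1.1, cmp p.1 a = cmp p.2 b := by
  obtain ⟨a, hba, hf⟩ := exists_across hc f.comm b
  exact ⟨a, hba.symm, fun p hp => (hf p.swap (swap_mem_comm hp)).symm⟩

def definedAtLeft (hc : IsColorDense c) (a : α) : Cofinal (ColorPartialIso c) where
  carrier := {f | ∃ b, (a, b) ∈ f.1.1}
  isCofinal f :=
    let ⟨b, hab, hf⟩ := exists_across hc f a
    ⟨f.insert a b hab hf, ⟨b, Finset.mem_insert_self _ _⟩, Finset.subset_insert _ _⟩

def definedAtRight (hc : IsColorDense c) (b : α) : Cofinal (ColorPartialIso c) where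
  carrier := {f | ∃ a, (a, b) ∈ f.1.1}
  isCofinal f :=
    let ⟨a, hab, hf⟩ := exists_across_symm hc f b
    ⟨f.insert a b hab hf, ⟨a, Finset.mem_insert_self _ _⟩, Finset.subset_insert _ _⟩

end ColorPartialIso

open ColorPartialIso in
theorem IsColorDense.exists_orderIso_apply_eq_of_color_eq [Countable α] [DenselyOrdered α]
    [NoMinOrder α] [NoMaxOrder α] {c : α → κ} (hc : IsColorDense c) {p q : α}
    (hpq : c p = c q) :
    ∃ γ : α ≃o α, γ p = q ∧ ∀ x, c (γ x) = c x := by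
  have : Nonempty α := ⟨p⟩
  have := Encodable.ofCountable α
  let f₀ : ColorPartialIso c := ⟨⟨{(p, q)}, by simp⟩, by simpa⟩
  let cofinals : α ⊕ α → Cofinal (ColorPartialIso c) :=
    Sum.elim (definedAtLeft hc) (definedAtRight hc)
  let I := idealOfCofinals f₀ cofinals
  have compat :
      ∀ f ∈ I, ∀ g ∈ I, ∀ x ∈ f.1.1, ∀ y ∈ g.1.1, cmp x.1 y.1 = cmp x.2 y.2 := by
    intro f hf g hg x hx y hy
    obtain ⟨m, -, hfm, hgm⟩ := I.directed f hf g hg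
    exact m.1.2 x (hfm hx) y (hgm hy)
  have hF : ∀ a, ∃ b, ∃ f ∈ I, (a, b) ∈ f.1.1 := fun a =>
    let ⟨f, ⟨b, hb⟩, hf⟩ := cofinal_meets_idealOfCofinals f₀ cofinals (Sum.inl a)
    ⟨b, f, hf, hb⟩
  have hG : ∀ b, ∃ a, ∃ f ∈ I, (a, b) ∈ f.1.1 := fun b =>
    let ⟨f, ⟨a, ha⟩, hf⟩ := cofinal_meets_idealOfCofinals f₀ cofinals (Sum.inr b)
    ⟨a, f, hf, ha⟩
  choose F f hfI hfF using hF
  choose G g hgI hgG using hG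
  refine ⟨OrderIso.ofCmpEqCmp F G fun a b => compat _ (hfI a) _ (hgI b) _ (hfF a) _ (hgG b),
    ?_, fun x => (f x).2 _ (hfF x) |>.symm⟩
  have h := compat _ (hfI p) f₀ (mem_idealOfCofinals f₀ cofinals) _ (hfF p) (p, q)
    (Finset.mem_singleton_self _)
  rw [cmp_self_eq_eq, eq_comm, cmp_eq_eq_iff] at h
  exact h

theorem qNoTwoDistinguishing (c : ℚ → Bool) :
    ∃ γ : ℚ ≃o ℚ, γ ≠ OrderIso.refl ℚ ∧ ∀ q : ℚ, c (γ q) = c q := by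
  by_cases hc : IsColorDense c
  · obtain ⟨q, ⟨h0q, -⟩, hq⟩ := hc (c 0) 0 1 one_pos
    obtain ⟨γ, hγ0, hγc⟩ := hc.exists_orderIso_apply_eq_of_color_eq hq.symm
    exact ⟨γ, fun h => h0q.ne (by rw [← hγ0, h, OrderIso.refl_apply]), hγc⟩
  · obtain ⟨k, x, y, hxy, hk⟩ : ∃ k x y, x < y ∧ ∀ z ∈ Set.Ioo x y, c z ≠ k := by
      by_contra! h
      exact hc h
    have : Nonempty (Set.Ioo x y) := (Set.nonempty_Ioo.2 hxy).to_subtype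
    obtain ⟨ψ, hψ⟩ := exists_orderIso_ne_refl (α := Set.Ioo x y)
    classical
    exact exists_orderIso_ne_refl_of_forall_mem_color_eq Set.ordConnected_Ioo hψ
      fun z hz => Bool.eq_not.2 (hk z hz)
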